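/- Let h₁ solve the boundary value problem (1/2)h₁''(x) - ωx h₁'(x) = -1 on (ℓ,u) with h₁(ℓ) = h₁(u) = 0. Then the general solution of the ODE is h₁(x) = c₁ erfi(√ω x) - x² F(ωx²) + c₂, where F(t) = ₂F₂(1,1; 3/2,2; t), i.e., the function x ↦ x²F(ωx²) is a particular solution: (1/2)(x²F(ωx²))'' - ωx(x²F(ωx²))' = 1. -/

import Mathlib

open MeasureTheory Real

/-- The imaginary error function `erfi(z) = (2/√π) ∫_0^z e^{t²} dt`. -/
noncomputable def erfi (z : ℝ) : ℝ :=
  (2 / Real.sqrt Real.pi) * ∫ t in (0 : ℝ)..z, Real.exp (t ^ 2)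

/-- The generalized hypergeometric function `₂F₂(1,1; 3/2,2; t)`, whose series
`Σₖ ((1)ₖ(1)ₖ)/((3/2)ₖ(2)ₖ) tᵏ/k!` simplifies to `Σₖ tᵏ/((3/2)ₖ (k+1))`. -/
noncomputable def F22 (t : ℝ) : ℝ :=
  ∑' k : ℕ, t ^ k / (((ascPochhammer ℝ k).eval (3 / 2 : ℝ)) * (k + 1))

/-!
`F` has coefficients `1/((3/2)ₖ (k+1))` and `Φ = ₁F₁(1; 3/2; ·)` has coefficients `1/(3/2)ₖ`,
so `(t F(t))' = Φ(t)` and hence `(x² F(ωx²))' = 2x Φ(ωx²)`. The recurrence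
`(3/2)ₖ₊₁ = (3/2)ₖ (k + 3/2)` makes the series of `Φ + 2tΦ' - 2tΦ` telescope to `1`, which at
`t = ωx²` is exactly `(1/2)h'' - ωx h' = 1` for `h(x) = x² F(ωx²)`. Since `erfi(√ω x)' ∝ e^{ωx²}`,
the `erfi` term solves the homogeneous equation.
-/

open Nat

section ExpBounded

noncomputable def seriesSum (c : ℕ → ℝ) (t : ℝ) : ℝ := ∑' k, c k * t ^ k

def derivCoeff (c : ℕ → ℝ) (k : ℕ) : ℝ := (k + 1) * c (k + 1)

def ExpBounded (c : ℕ → ℝ) : Prop := ∀ k, |c k| ≤ (k ! : ℝ)⁻¹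

variable {c : ℕ → ℝ}

theorem expBounded_derivCoeff (hc : ExpBounded c) : ExpBounded (derivCoeff c) := fun k => by
  have hk : (0 : ℝ) < k + 1 := by positivity
  calc |derivCoeff c k| = (k + 1) * |c (k + 1)| := by
        rw [derivCoeff, abs_mul, abs_of_pos hk]
    _ ≤ (k + 1) * ((k + 1)! : ℝ)⁻¹ := by gcongr; exact hc (k + 1)
    _ = (k ! : ℝ)⁻¹ := by rw [factorial_succ]; push_cast; field_simp

theorem ExpBounded.norm_mul_pow_le (hc : ExpBounded c) (k : ℕ) {s R : ℝ} (hs : |s| ≤ R) :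
    ‖c k * s ^ k‖ ≤ R ^ k / k ! := by
  rw [norm_mul, norm_pow, Real.norm_eq_abs, Real.norm_eq_abs, div_eq_inv_mul]
  exact mul_le_mul (hc k) (pow_le_pow_left₀ (abs_nonneg s) hs k) (by positivity) (by positivity)

theorem ExpBounded.hasSum (hc : ExpBounded c) (t : ℝ) :
    HasSum (fun k => c k * t ^ k) (seriesSum c t) :=
  (Summable.of_norm_bounded (Real.summable_pow_div_factorial |t|)
    fun k => hc.norm_mul_pow_le k le_rfl).hasSum

theorem ExpBounded.hasSum_succ (hc : ExpBounded c) (t : ℝ) :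
    HasSum (fun k => c (k + 1) * t ^ (k + 1)) (seriesSum c t - c 0) :=
  (hasSum_nat_add_iff (f := fun k => c k * t ^ k) 1).mpr (by simpa using hc.hasSum t)

theorem ExpBounded.hasDerivAt_seriesSum (hc : ExpBounded c) (t : ℝ) :
    HasDerivAt (seriesSum c) (seriesSum (derivCoeff c) t) t := by
  set R := |t| + 1
  have hball : Metric.ball (0 : ℝ) R = {s | |s| < R} := by
    ext s; simp
  have hsplit : seriesSum c = fun s => c 0 + ∑' k, c (k + 1) * s ^ (k + 1) :=
    funext fun s => by rw [(hc.hasSum_succ s).tsum_eq]; ring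
  have hterm (k : ℕ) (s : ℝ) :
      HasDerivAt (fun s => c (k + 1) * s ^ (k + 1)) (derivCoeff c k * s ^ k) s :=
    ((hasDerivAt_pow (k + 1) s).const_mul (c (k + 1))).congr_deriv (by
      rw [derivCoeff]; push_cast; ring)
  have hbound (k : ℕ) (s : ℝ) (hs : s ∈ Metric.ball 0 R) :
      ‖derivCoeff c k * s ^ k‖ ≤ R ^ k / k ! := by
    rw [hball] at hs
    exact (expBounded_derivCoeff hc).norm_mul_pow_le k hs.le
  have ht : t ∈ Metric.ball 0 R := by rw [hball]; exact lt_add_one |t|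
  rw [hsplit]
  exact (hasDerivAt_tsum_of_isPreconnected (Real.summable_pow_div_factorial R)
    Metric.isOpen_ball (convex_ball 0 R).isPreconnected (fun k s _ => hterm k s) hbound ht
    (hc.hasSum_succ t).summable ht).const_add (c 0)

end ExpBounded

theorem factorial_le_ascPochhammer_eval {a : ℝ} (ha : 1 ≤ a) (n : ℕ) :
    (n ! : ℝ) ≤ (ascPochhammer ℝ n).eval a := by
  induction n with
  | zero => simp
  | succ n ih =>
    rw [factorial_succ, ascPochhammer_succ_eval, mul_comm]
    push_cast
    exact mul_le_mul ih (by linarith) (by positivity)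
      (ascPochhammer_pos n a (by linarith)).le

noncomputable def poch32 (k : ℕ) : ℝ := (ascPochhammer ℝ k).eval (3 / 2)

theorem poch_pos (k : ℕ) : 0 < poch32 k := ascPochhammer_pos k _ (by norm_num)

theorem poch_succ (k : ℕ) : poch32 (k + 1) = poch32 k * (3 / 2 + k) := ascPochhammer_succ_eval k _

noncomputable def coeffF11 (k : ℕ) : ℝ := (poch32 k)⁻¹

noncomputable def coeffF22 (k : ℕ) : ℝ := (poch32 k * (k + 1))⁻¹

/-- `₁F₁(1; 3/2; t)`. -/
noncomputable def F11 : ℝ → ℝ := seriesSum coeffF11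

theorem F22_eq_seriesSum : F22 = seriesSum coeffF22 :=
  funext fun _ => tsum_congr fun _ => div_eq_inv_mul _ _

theorem coeffF11_eq (k : ℕ) : coeffF11 k = (k + 1) * coeffF22 k := by
  have := (poch_pos k).ne'
  rw [coeffF11, coeffF22]
  field_simp

theorem two_mul_coeffF11 (k : ℕ) : 2 * coeffF11 k = (2 * k + 3) * coeffF11 (k + 1) := by
  have := (poch_pos k).ne'
  rw [coeffF11, coeffF11, poch_succ]
  field_simp
  ring

theorem expBounded_coeffF11 : ExpBounded coeffF11 := fun k => by
  rw [coeffF11, abs_of_pos (inv_pos.mpr (poch_pos k))]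
  exact inv_anti₀ (by positivity) (factorial_le_ascPochhammer_eval (by norm_num) k)

theorem expBounded_coeffF22 : ExpBounded coeffF22 := fun k => by
  have hk : (1 : ℝ) ≤ k + 1 := by linarith [(k.cast_nonneg : (0 : ℝ) ≤ k)]
  calc |coeffF22 k| = coeffF11 k / (k + 1) := by
        rw [coeffF22, coeffF11, mul_inv, abs_of_pos (by positivity [poch_pos k]), div_eq_mul_inv]
    _ ≤ coeffF11 k := div_le_self (inv_pos.mpr (poch_pos k)).le hk
    _ ≤ (k ! : ℝ)⁻¹ := le_of_abs_le (expBounded_coeffF11 k)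

theorem F22_add_mul_deriv (t : ℝ) :
    F22 t + t * seriesSum (derivCoeff coeffF22) t = F11 t := by
  have hsum := (expBounded_coeffF22.hasSum_succ t).add
    (((expBounded_derivCoeff expBounded_coeffF22).hasSum t).mul_left t)
  have hterm : (fun k : ℕ => coeffF22 (k + 1) * t ^ (k + 1) +
      t * (derivCoeff coeffF22 k * t ^ k)) = fun k => coeffF11 (k + 1) * t ^ (k + 1) := by
    funext k
    rw [derivCoeff, coeffF11_eq]
    push_cast
    ring
  rw [hterm] at hsum
  have := (expBounded_coeffF11.hasSum_succ t).unique hsum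
  have h0 : coeffF11 0 = coeffF22 0 := by simpa using coeffF11_eq 0
  rw [F22_eq_seriesSum, F11]
  linarith

theorem F11_add_two_mul_deriv_sub (t : ℝ) :
    F11 t + 2 * t * seriesSum (derivCoeff coeffF11) t - 2 * t * F11 t = 1 := by
  have hΦ := expBounded_coeffF11.hasSum t
  have htelescope := hΦ.sub (expBounded_coeffF11.hasSum_succ t)
  have hsum := hΦ.add ((((expBounded_derivCoeff expBounded_coeffF11).hasSum t).mul_left (2 * t)).sub
    (hΦ.mul_left (2 * t)))
  have hterm : (fun k : ℕ => coeffF11 k * t ^ k + (2 * t * (derivCoeff coeffF11 k * t ^ k) -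
      2 * t * (coeffF11 k * t ^ k))) =
      fun k => coeffF11 k * t ^ k - coeffF11 (k + 1) * t ^ (k + 1) := by
    funext k
    rw [derivCoeff]
    linear_combination (-(t ^ k * t)) * two_mul_coeffF11 k
  rw [hterm] at hsum
  have := htelescope.unique hsum
  have h0 : coeffF11 0 = 1 := by simp [coeffF11, poch32]
  rw [F11]
  linarith

theorem hasDerivAt_sq_mul_F22 (ω x : ℝ) :
    HasDerivAt (fun y => y ^ 2 * F22 (ω * y ^ 2)) (2 * x * F11 (ω * x ^ 2)) x := by
  have hF := (expBounded_coeffF22.hasDerivAt_seriesSum (ω * x ^ 2)).comp x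
    ((hasDerivAt_pow 2 x).const_mul ω)
  rw [← F22_eq_seriesSum] at hF
  refine ((hasDerivAt_pow 2 x).fun_mul hF).congr_deriv ?_
  rw [Function.comp_apply, ← F22_add_mul_deriv]
  push_cast
  ring

theorem hasDerivAt_two_mul_F11 (ω x : ℝ) :
    HasDerivAt (fun y => 2 * y * F11 (ω * y ^ 2))
      (2 * F11 (ω * x ^ 2) + 4 * (ω * x ^ 2) * seriesSum (derivCoeff coeffF11) (ω * x ^ 2)) x := by
  have hΦ := (expBounded_coeffF11.hasDerivAt_seriesSum (ω * x ^ 2)).comp x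
    ((hasDerivAt_pow 2 x).const_mul ω)
  refine (((hasDerivAt_id x).const_mul 2).fun_mul hΦ).congr_deriv ?_
  rw [Function.comp_apply, F11, id]
  push_cast
  ring

theorem hasDerivAt_erfi (z : ℝ) : HasDerivAt erfi (2 / √π * exp (z ^ 2)) z := by
  have hc : Continuous fun t : ℝ => exp (t ^ 2) := by fun_prop
  exact (intervalIntegral.integral_hasDerivAt_right (hc.intervalIntegrable _ _)
    hc.aestronglyMeasurable.stronglyMeasurableAtFilter hc.continuousAt).const_mul _

theorem hasDerivAt_erfi_sqrt_mul {ω : ℝ} (hω : 0 ≤ ω) (x : ℝ) :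
    HasDerivAt (fun y => erfi (√ω * y)) (2 / √π * √ω * exp (ω * x ^ 2)) x := by
  refine ((hasDerivAt_erfi (√ω * x)).comp x ((hasDerivAt_id x).const_mul √ω)).congr_deriv ?_
  rw [mul_pow, sq_sqrt hω]
  ring

theorem deriv_deriv_eq_of_hasDerivAt {f f' : ℝ → ℝ} {f'' x : ℝ}
    (hf : ∀ y, HasDerivAt f (f' y) y) (hf' : HasDerivAt f' f'' x) : deriv (deriv f) x = f'' := by
  rw [show deriv f = f' from funext fun y => (hf y).deriv]
  exact hf'.deriv

/-- The general solution of `(1/2)h'' - ωx h' = -1` is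
`h(x) = c₁ erfi(√ω x) - x²F(ωx²) + c₂` with `F = ₂F₂(1,1;3/2,2;·)`; that is,
`x ↦ x²F(ωx²)` is a particular solution with `(1/2)(x²F(ωx²))'' - ωx(x²F(ωx²))' = 1`. -/
theorem hypergeometric_particular_solution (ωc : ℝ) (hω : 0 < ωc) :
    (∀ x : ℝ,
      (1 / 2) * deriv (deriv fun y : ℝ => y ^ 2 * F22 (ωc * y ^ 2)) x -
        ωc * x * deriv (fun y : ℝ => y ^ 2 * F22 (ωc * y ^ 2)) x = 1) ∧
    (∀ c₁ c₂ : ℝ, ∀ x : ℝ,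
      (1 / 2) * deriv (deriv fun y : ℝ =>
          c₁ * erfi (Real.sqrt ωc * y) - y ^ 2 * F22 (ωc * y ^ 2) + c₂) x -
        ωc * x * deriv (fun y : ℝ =>
          c₁ * erfi (Real.sqrt ωc * y) - y ^ 2 * F22 (ωc * y ^ 2) + c₂) x = -1) := by
  have hG (y : ℝ) := hasDerivAt_sq_mul_F22 ωc y
  have hG' (y : ℝ) := hasDerivAt_two_mul_F11 ωc y
  have hODE (y : ℝ) := F11_add_two_mul_deriv_sub (ωc * y ^ 2)
  set K := 2 / √π * √ωc
  have hE (y : ℝ) := hasDerivAt_erfi_sqrt_mul hω.le y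
  have hE' (y : ℝ) : HasDerivAt (fun y => K * exp (ωc * y ^ 2))
      (K * (exp (ωc * y ^ 2) * (ωc * (2 * y)))) y := by
    refine (((hasDerivAt_pow 2 y).const_mul ωc).exp.const_mul K).congr_deriv ?_
    push_cast; ring
  refine ⟨fun x => ?_, fun c₁ c₂ x => ?_⟩
  · rw [deriv_deriv_eq_of_hasDerivAt hG (hG' x), (hG x).deriv]
    linear_combination hODE x
  · have hH (y : ℝ) := (((hE y).const_mul c₁).fun_sub (hG y)).add_const c₂
    rw [deriv_deriv_eq_of_hasDerivAt hH (((hE' x).const_mul c₁).fun_sub (hG' x)), (hH x).deriv]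
    linear_combination -hODE x
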